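/- There is no positive integer N satisfying σ_∞(σ_∞(N)) = 2N with σ_∞(N) = 2^f q^{2^l}, where q is an odd prime, f ≥ 1, and l > 0. -/

import Mathlib

/-- The sum of infinitary divisors of `n`: for `n = ∏ p ^ e_p`, it equals
`∏_p ∏_{j : bit j of e_p is 1} (p ^ 2 ^ j + 1)`. -/
def infsigma (n : ℕ) : ℕ :=
  n.factorization.prod fun p e =>
    ∏ j ∈ Finset.range e, if e.testBit j then p ^ 2 ^ j + 1 else 1

/-!
Put `X = q ^ 2 ^ l`, an odd square. Since `infsigma` is multiplicative and
`infsigma (q ^ 2 ^ l) = X + 1`, the hypotheses become `infsigma (2 ^ f) * (X + 1) = 2 * N` and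
`infsigma N = 2 ^ f * X`, where `infsigma (2 ^ f)` is the product of the Fermat numbers `F_j`
over the bits `j` of `f`.

If `f` is odd, then `F_0 = 3` divides `infsigma (2 ^ f)` exactly once and `3 ∤ X + 1`, so
`N = 3 * K` with `3 ∤ K` and `infsigma N = 4 * infsigma K ≥ 4 * K`. Together with
`infsigma (2 ^ f) ≥ 3 * 2 ^ (f - 1)` this contradicts `infsigma N = 2 ^ f * X`.

If `f` is even, every prime factor `p` of `N` divides some `F_j` with `j ≥ 1` or `X + 1`, hence
`p ≡ 1 (mod 4)`. Each factor `p ^ 2 ^ j + 1` of `infsigma N` is then `2 * q ^ b` with `b ≥ 1`,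
and `e_p` has only one bit, since `q ∣ p ^ 2 ^ j + 1` forces `p` to have order `2 ^ (j + 1)`
modulo `q`. So `p ^ e_p + 1 = 2 * q ^ b_p` with distinct `b_p ≥ 1`, which gives
`3 * infsigma N ≤ 4 * N`. Against `3 * infsigma (2 ^ f) < 2 ^ (f + 2)` this forces `X < 8`, while `X ≥ 3 ^ 2`.
-/

open Finset

theorem Nat.prod_range_ite_testBit {M : Type*} [CommMonoid M] (n : ℕ) (g : ℕ → M) :
    ∏ j ∈ range n, (if n.testBit j then g j else 1) = ∏ j ∈ n.bitIndices.toFinset, g j := by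
  rw [← prod_filter]
  congr 1
  ext j
  simp only [mem_filter, mem_range, List.mem_toFinset, Nat.mem_bitIndices]
  exact ⟨And.right, fun h => ⟨Nat.lt_two_pow_self.trans_le (Nat.ge_two_pow_of_testBit h), h⟩⟩

theorem Nat.sum_two_pow_bitIndices (n : ℕ) : ∑ j ∈ n.bitIndices.toFinset, 2 ^ j = n := by
  rw [List.sum_toFinset _ Nat.bitIndices_nodup, Nat.sum_map_two_pow_bitIndices]

theorem Nat.eq_two_pow_of_testBit {n j : ℕ} (hj : n.testBit j)
    (h : ∀ i, n.testBit i → i = j) : n = 2 ^ j := by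
  refine Nat.eq_of_testBit_eq fun i => ?_
  rw [Nat.testBit_two_pow]
  by_cases hij : j = i
  · subst hij
    simp [hj]
  · simpa [hij] using mt (h i) (Ne.symm hij)

theorem Nat.factorization_ne_zero_of_mem_primeFactors {n p : ℕ} (hp : p ∈ n.primeFactors) :
    n.factorization p ≠ 0 :=
  Finsupp.mem_support_iff.1 hp

theorem Nat.Prime.mod_four_eq_one_of_dvd_pow_two_pow_add_one {p a n : ℕ} (hp : p.Prime)
    (hp2 : p ≠ 2) (hn : n ≠ 0) (h : p ∣ a ^ 2 ^ n + 1) : p % 4 = 1 := by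
  obtain ⟨k, rfl⟩ := Nat.pow_pow_add_primeFactors_one_lt hp hp2 h
  obtain ⟨n, rfl⟩ := Nat.exists_eq_add_one_of_ne_zero hn
  have : k * 2 ^ (n + 1 + 1) = 4 * (k * 2 ^ n) := by ring
  omega

theorem orderOf_eq_two_pow_of_dvd_pow_two_pow_add_one {q a i : ℕ} [Fact q.Prime] (hq2 : q ≠ 2)
    (h : q ∣ a ^ 2 ^ i + 1) : orderOf (a : ZMod q) = 2 ^ (i + 1) := by
  have : Fact (2 < q) := ⟨lt_of_le_of_ne (Fact.out : q.Prime).two_le (Ne.symm hq2)⟩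
  have ha : (a : ZMod q) ^ 2 ^ i = -1 := by
    rw [eq_neg_iff_add_eq_zero]
    exact_mod_cast (ZMod.natCast_eq_zero_iff _ q).2 h
  apply orderOf_eq_prime_pow
  · rw [ha]
    exact ZMod.neg_one_ne_one
  · rw [pow_succ, pow_mul, ha, neg_one_sq]

theorem eq_of_prime_dvd_pow_two_pow_add_one {q a i j : ℕ} (hq : q.Prime) (hq2 : q ≠ 2)
    (hi : q ∣ a ^ 2 ^ i + 1) (hj : q ∣ a ^ 2 ^ j + 1) : i = j := by
  have := Fact.mk hq
  have h := (orderOf_eq_two_pow_of_dvd_pow_two_pow_add_one hq2 hi).symm.trans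
    (orderOf_eq_two_pow_of_dvd_pow_two_pow_add_one hq2 hj)
  exact Nat.succ_injective (Nat.pow_right_injective le_rfl h)

theorem exists_eq_two_mul_pow_of_dvd {q F f B : ℕ} (hq : q.Prime) (hF : F % 4 = 2)
    (h : F ∣ 2 ^ f * q ^ B) : ∃ b, F = 2 * q ^ b := by
  obtain ⟨c, rfl⟩ : 2 ∣ F := by omega
  have hc : c.Coprime (2 ^ f) :=
    Nat.Coprime.pow_right _ (Nat.coprime_two_right.2 (Nat.odd_iff.2 (by omega)))
  obtain ⟨b, -, rfl⟩ :=
    (Nat.dvd_prime_pow hq).1 (hc.dvd_of_dvd_mul_left (dvd_of_mul_left_dvd h))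
  exact ⟨b, rfl⟩

theorem not_three_dvd_sq_add_one (y : ℕ) : ¬ 3 ∣ y ^ 2 + 1 := by
  rw [Nat.dvd_iff_mod_eq_zero, Nat.add_mod, Nat.pow_mod]
  have := Nat.mod_lt y three_pos
  interval_cases y % 3 <;> simp

theorem Finset.one_sub_sum_le_prod_one_sub {ι R : Type*} [CommRing R] [LinearOrder R]
    [IsStrictOrderedRing R] (s : Finset ι) {u : ι → R} (h0 : ∀ i ∈ s, 0 ≤ u i)
    (h1 : ∀ i ∈ s, u i ≤ 1) : 1 - ∑ i ∈ s, u i ≤ ∏ i ∈ s, (1 - u i) := by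
  induction s using Finset.cons_induction with
  | empty => simp
  | cons a s ha ih =>
    simp only [mem_cons, forall_eq_or_imp] at h0 h1
    rw [prod_cons, sum_cons]
    have hs : 0 ≤ ∑ i ∈ s, u i := sum_nonneg h0.2
    nlinarith [mul_le_mul_of_nonneg_left (ih h0.2 h1.2) (sub_nonneg.2 h1.1), mul_nonneg h0.1 hs]

theorem sum_one_div_two_mul_pow_le {q : ℝ} (hq : 3 ≤ q) {S : Finset ℕ} (hS : 0 ∉ S) :
    ∑ b ∈ S, 1 / (2 * q ^ b) ≤ 1 / 4 := by
  have hsub : S ⊆ Ico 1 (S.sup id + 1) := fun b hb =>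
    mem_Ico.2 ⟨Nat.pos_of_ne_zero (ne_of_mem_of_not_mem hb hS),
      Nat.lt_succ_of_le (le_sup (f := id) hb)⟩
  calc ∑ b ∈ S, 1 / (2 * q ^ b) ≤ ∑ b ∈ S, (1 / 2) * (1 / 3) ^ b := by
        gcongr with b
        rw [one_div_pow, div_mul_div_comm, one_mul]
        gcongr
    _ ≤ ∑ b ∈ Ico 1 (S.sup id + 1), (1 / 2) * (1 / 3 : ℝ) ^ b :=
        sum_le_sum_of_subset_of_nonneg hsub fun _ _ _ => by positivity
    _ ≤ 1 / 2 * ((1 / 3) ^ 1 / (1 - 1 / 3)) := by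
        rw [← mul_sum]
        gcongr
        exact geom_sum_Ico_le_of_lt_one (by norm_num) (by norm_num)
    _ = 1 / 4 := by norm_num

theorem three_mul_prod_le_four_mul_prod {q : ℕ} (hq : 3 ≤ q) {S : Finset ℕ} (hS : 0 ∉ S) :
    3 * ∏ b ∈ S, 2 * q ^ b ≤ 4 * ∏ b ∈ S, (2 * q ^ b - 1) := by
  have hq' : (3 : ℝ) ≤ q := by exact_mod_cast hq
  have hpos : ∀ b, (0 : ℝ) < 2 * q ^ b := fun b => by positivity
  suffices h : (3 : ℝ) * ∏ b ∈ S, 2 * (q : ℝ) ^ b ≤ 4 * ∏ b ∈ S, (2 * (q : ℝ) ^ b - 1) by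
    have h1 : ∀ b, 1 ≤ 2 * q ^ b := fun b => by have := Nat.one_le_pow b q (by omega); omega
    rw [← Nat.cast_le (α := ℝ)]
    push_cast [Nat.cast_sub (h1 _)]
    exact h
  have hW := S.one_sub_sum_le_prod_one_sub (u := fun b => 1 / (2 * (q : ℝ) ^ b))
    (fun b _ => (one_div_pos.2 (hpos b)).le)
    (fun b _ => (div_le_one (hpos b)).2
      (by nlinarith [one_le_pow₀ (by linarith : (1 : ℝ) ≤ q) (n := b)]))
  have hsum := sum_one_div_two_mul_pow_le hq' hS
  calc 3 * ∏ b ∈ S, 2 * (q : ℝ) ^ b = 4 * ((∏ b ∈ S, 2 * (q : ℝ) ^ b) * (3 / 4)) := by ring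
    _ ≤ 4 * ((∏ b ∈ S, 2 * (q : ℝ) ^ b) * ∏ b ∈ S, (1 - 1 / (2 * (q : ℝ) ^ b))) := by
        gcongr
        linarith
    _ = 4 * ∏ b ∈ S, (2 * (q : ℝ) ^ b - 1) := by
        rw [← prod_mul_distrib]
        congr 1
        refine prod_congr rfl fun b _ => ?_
        field_simp [(hpos b).ne']

theorem infsigma_eq_prod_primeFactors (n : ℕ) :
    infsigma n = ∏ p ∈ n.primeFactors,
      ∏ j ∈ (n.factorization p).bitIndices.toFinset, (p ^ 2 ^ j + 1) := by
  simp only [infsigma, Nat.prod_range_ite_testBit]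
  rfl

theorem infsigma_prime_pow {p : ℕ} (hp : p.Prime) (e : ℕ) :
    infsigma (p ^ e) = ∏ j ∈ e.bitIndices.toFinset, (p ^ 2 ^ j + 1) := by
  rw [infsigma, hp.factorization_pow, Finsupp.prod_single_index (by simp),
    Nat.prod_range_ite_testBit]

theorem infsigma_prime_pow_two_pow {p : ℕ} (hp : p.Prime) (j : ℕ) :
    infsigma (p ^ 2 ^ j) = p ^ 2 ^ j + 1 := by
  simp [infsigma_prime_pow hp]

theorem infsigma_mul {m n : ℕ} (h : m.Coprime n) :
    infsigma (m * n) = infsigma m * infsigma n := by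
  rw [infsigma, Nat.factorization_mul_of_coprime h,
    Finsupp.prod_add_index_of_disjoint h.disjoint_primeFactors]
  rfl

theorem infsigma_eq_prod_infsigma_prime_pow (n : ℕ) :
    infsigma n = ∏ p ∈ n.primeFactors, infsigma (p ^ n.factorization p) := by
  rw [infsigma_eq_prod_primeFactors]
  exact prod_congr rfl fun p hp => (infsigma_prime_pow (Nat.prime_of_mem_primeFactors hp) _).symm

theorem pow_two_pow_add_one_dvd_infsigma {n p j : ℕ} (hp : p ∈ n.primeFactors)
    (hj : (n.factorization p).testBit j) : p ^ 2 ^ j + 1 ∣ infsigma n := by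
  rw [infsigma_eq_prod_primeFactors]
  exact (dvd_prod_of_mem (fun j => p ^ 2 ^ j + 1) (by simpa using hj)).trans
    (dvd_prod_of_mem _ hp)

theorem pow_le_infsigma_prime_pow {p : ℕ} (hp : p.Prime) (e : ℕ) : p ^ e ≤ infsigma (p ^ e) := by
  rw [infsigma_prime_pow hp]
  calc p ^ e = ∏ j ∈ e.bitIndices.toFinset, p ^ 2 ^ j := by
        rw [prod_pow_eq_pow_sum, Nat.sum_two_pow_bitIndices]
    _ ≤ _ := prod_le_prod' fun j _ => Nat.le_succ _

theorem le_infsigma (n : ℕ) : n ≤ infsigma n := by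
  rcases eq_or_ne n 0 with rfl | hn
  · exact Nat.zero_le _
  calc n = ∏ p ∈ n.primeFactors, p ^ n.factorization p :=
        Nat.prod_primeFactors_pow_factorization hn
    _ ≤ _ := by
      rw [infsigma_eq_prod_infsigma_prime_pow]
      exact prod_le_prod' fun p hp =>
        pow_le_infsigma_prime_pow (Nat.prime_of_mem_primeFactors hp) _

theorem infsigma_two_pow (n : ℕ) :
    infsigma (2 ^ n) = ∏ j ∈ n.bitIndices.toFinset, Nat.fermatNumber j :=
  infsigma_prime_pow Nat.prime_two n

theorem infsigma_two_pow_two_mul_add_one (n : ℕ) :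
    infsigma (2 ^ (2 * n + 1)) = 3 * infsigma (2 ^ (2 * n)) := by
  rw [infsigma_two_pow, infsigma_two_pow, Nat.bitIndices_two_mul_add_one, Nat.bitIndices_two_mul,
    List.toFinset_cons, prod_insert (by simp), Nat.fermatNumber_zero]

theorem prod_fermatNumber_lt (S : Finset ℕ) :
    ∏ j ∈ S, Nat.fermatNumber j < 2 ^ (∑ j ∈ S, 2 ^ j + 1) := by
  induction S using Finset.induction_on_max with
  | empty => simp
  | insert a s hlt ih =>
    have ha : a ∉ s := fun h => (hlt a h).false
    have hs : ∑ j ∈ s, 2 ^ j + 1 ≤ 2 ^ a := Nat.geomSum_lt le_rfl hlt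
    have hC : 2 ^ (∑ j ∈ s, 2 ^ j + 1) ≤ 2 ^ 2 ^ a := Nat.pow_le_pow_right two_pos hs
    rw [prod_insert ha, sum_insert ha, add_assoc, pow_add, Nat.fermatNumber]
    nlinarith [Nat.mul_le_mul_left (2 ^ 2 ^ a + 1) ih]

theorem infsigma_two_pow_lt (n : ℕ) : infsigma (2 ^ n) < 2 ^ (n + 1) := by
  have := prod_fermatNumber_lt n.bitIndices.toFinset
  rwa [Nat.sum_two_pow_bitIndices, ← infsigma_two_pow] at this

theorem mod_four_eq_one_of_dvd_infsigma_two_pow_two_mul {p n : ℕ} (hp : p.Prime)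
    (h : p ∣ infsigma (2 ^ (2 * n))) : p % 4 = 1 := by
  rw [infsigma_two_pow, Nat.bitIndices_two_mul, hp.prime.dvd_finsetProd_iff] at h
  obtain ⟨j, hj, hpj⟩ := h
  obtain ⟨i, -, rfl⟩ := by simpa using hj
  exact hp.mod_four_eq_one_of_dvd_pow_two_pow_add_one
    ((Nat.odd_fermatNumber _).ne_two_of_dvd_nat hpj) (Nat.succ_ne_zero i) hpj

theorem mod_four_eq_one_of_mul_sq_add_one_eq_two_mul {N s y : ℕ} (hy : Odd y)
    (hs : ∀ p, p.Prime → p ∣ s → p % 4 = 1) (h : s * (y ^ 2 + 1) = 2 * N) :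
    ∀ p ∈ N.primeFactors, p % 4 = 1 := by
  obtain ⟨k, rfl⟩ := hy
  have hN : N = s * (2 * k ^ 2 + 2 * k + 1) := by linarith
  intro p hp
  have hpp := Nat.prime_of_mem_primeFactors hp
  rcases hpp.dvd_mul.1 (hN ▸ Nat.dvd_of_mem_primeFactors hp) with hps | hpk
  · exact hs p hpp hps
  · refine hpp.mod_four_eq_one_of_dvd_pow_two_pow_add_one (a := 2 * k + 1) (n := 1) ?_
      one_ne_zero (hpk.trans ⟨2, by ring⟩)
    rintro rfl
    omega

theorem exists_infsigma_prime_pow_eq_two_mul_pow {n q f B p : ℕ} (hq : q.Prime) (hq2 : q ≠ 2)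
    (hn : infsigma n ∣ 2 ^ f * q ^ B) (hp : p ∈ n.primeFactors) (hp4 : p % 4 = 1) :
    ∃ b, 0 < b ∧ infsigma (p ^ n.factorization p) = 2 * q ^ b ∧
      p ^ n.factorization p + 1 = 2 * q ^ b := by
  have hp1 : 1 < p := (Nat.prime_of_mem_primeFactors hp).one_lt
  have hbit : ∀ j, (n.factorization p).testBit j → ∃ b, 0 < b ∧ p ^ 2 ^ j + 1 = 2 * q ^ b := by
    intro j hj
    have h4 : (p ^ 2 ^ j + 1) % 4 = 2 := by
      simp [Nat.add_mod, Nat.pow_mod, hp4]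
    obtain ⟨b, hb⟩ := exists_eq_two_mul_pow_of_dvd hq h4
      ((pow_two_pow_add_one_dvd_infsigma hp hj).trans hn)
    refine ⟨b, Nat.pos_of_ne_zero ?_, hb⟩
    rintro rfl
    rw [pow_zero] at hb
    have := Nat.one_lt_pow (pow_ne_zero j two_ne_zero) hp1
    omega
  have hqdvd : ∀ j, (n.factorization p).testBit j → q ∣ p ^ 2 ^ j + 1 := fun j hj => by
    obtain ⟨b, hb, hpb⟩ := hbit j hj
    rw [hpb]
    exact (dvd_pow_self q hb.ne').mul_left 2
  obtain ⟨j, hj⟩ :=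
    Nat.exists_testBit_of_ne_zero (Nat.factorization_ne_zero_of_mem_primeFactors hp)
  have he := Nat.eq_two_pow_of_testBit hj fun i hi =>
    eq_of_prime_dvd_pow_two_pow_add_one hq hq2 (hqdvd i hi) (hqdvd j hj)
  obtain ⟨b, hb, hpb⟩ := hbit j hj
  rw [he, infsigma_prime_pow_two_pow (Nat.prime_of_mem_primeFactors hp)]
  exact ⟨b, hb, hpb, hpb⟩

theorem three_mul_infsigma_le_four_mul {n q f B : ℕ} (hq : q.Prime) (hq2 : q ≠ 2) (hn : n ≠ 0)
    (hdvd : infsigma n ∣ 2 ^ f * q ^ B) (h4 : ∀ p ∈ n.primeFactors, p % 4 = 1) :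
    3 * infsigma n ≤ 4 * n := by
  choose! b hb0 hσ hpow using fun p hp =>
    exists_infsigma_prime_pow_eq_two_mul_pow hq hq2 hdvd hp (h4 p hp)
  have hinj : Set.InjOn b n.primeFactors := fun p hp p' hp' h => by
    have hpp := hpow p hp
    rw [h, ← hpow p' hp', Nat.add_right_cancel_iff] at hpp
    exact ((Nat.prime_of_mem_primeFactors hp).pow_inj' (Nat.prime_of_mem_primeFactors hp')
      (Nat.factorization_ne_zero_of_mem_primeFactors hp)
      (Nat.factorization_ne_zero_of_mem_primeFactors hp') hpp).1
  have hS : 0 ∉ n.primeFactors.image b := by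
    simpa using fun p hp => (hb0 p hp).ne'
  have hq3 : 3 ≤ q := by have := hq.two_le; omega
  calc 3 * infsigma n = 3 * ∏ c ∈ n.primeFactors.image b, 2 * q ^ c := by
        rw [prod_image hinj, infsigma_eq_prod_infsigma_prime_pow]
        exact congrArg _ (prod_congr rfl hσ)
    _ ≤ 4 * ∏ c ∈ n.primeFactors.image b, (2 * q ^ c - 1) :=
        three_mul_prod_le_four_mul_prod hq3 hS
    _ = 4 * n := by
        rw [prod_image hinj]
        nth_rw 2 [Nat.prod_primeFactors_pow_factorization hn]
        exact congrArg _ (prod_congr rfl fun p hp => by have := hpow p hp; omega)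

theorem infsigma_ne_two_pow_mul_of_odd {N n X : ℕ} (hX : ¬ 3 ∣ X + 1)
    (hkey : infsigma (2 ^ (2 * n + 1)) * (X + 1) = 2 * N) :
    infsigma N ≠ 2 ^ (2 * n + 1) * X := by
  intro hσ
  rw [infsigma_two_pow_two_mul_add_one, mul_assoc] at hkey
  obtain ⟨K, rfl⟩ : 3 ∣ N :=
    (Nat.Coprime.dvd_mul_left (by norm_num)).1 (hkey ▸ dvd_mul_right 3 _)
  have hK : infsigma (2 ^ (2 * n)) * (X + 1) = 2 * K := by linarith
  have h3K : ¬ 3 ∣ K := fun h3 => by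
    rcases Nat.prime_three.dvd_mul.1 (hK ▸ h3.mul_left 2) with h | h
    · simpa using mod_four_eq_one_of_dvd_infsigma_two_pow_two_mul Nat.prime_three h
    · exact hX h
  have h3 : infsigma 3 = 4 := by simpa using infsigma_prime_pow_two_pow Nat.prime_three 0
  rw [infsigma_mul ((Nat.Prime.coprime_iff_not_dvd Nat.prime_three).2 h3K), h3, pow_succ] at hσ
  -- `2 ^ (2n) * (X + 1) ≤ infsigma (2 ^ (2n)) * (X + 1) = 2K ≤ 2 * infsigma K = 2 ^ (2n) * X`
  nlinarith [le_infsigma K, Nat.mul_le_mul_right (X + 1) (le_infsigma (2 ^ (2 * n))),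
    Nat.two_pow_pos (2 * n)]

theorem infsigma_ne_two_pow_mul_of_even {N n q B y : ℕ} (hq : q.Prime) (hq2 : q ≠ 2)
    (hN : N ≠ 0) (hy : Odd y) (hX : q ^ B = y ^ 2) (h9 : 9 ≤ q ^ B)
    (hkey : infsigma (2 ^ (2 * n)) * (q ^ B + 1) = 2 * N) :
    infsigma N ≠ 2 ^ (2 * n) * q ^ B := by
  intro hσ
  have h4 := mod_four_eq_one_of_mul_sq_add_one_eq_two_mul hy
    (fun p hp => mod_four_eq_one_of_dvd_infsigma_two_pow_two_mul hp) (hX ▸ hkey)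
  have hlow := three_mul_infsigma_le_four_mul hq hq2 hN hσ.dvd h4
  have hup := infsigma_two_pow_lt (2 * n + 1)
  rw [infsigma_two_pow_two_mul_add_one, pow_succ, pow_succ] at hup
  rw [hσ] at hlow
  -- `9 * 2 ^ (2n) * X ≤ 12 N = 6 * infsigma (2 ^ (2n)) * (X + 1) < 8 * 2 ^ (2n) * (X + 1)`
  nlinarith

theorem no_superperfect_infsigma_eq_two_pow_mul_prime_pow :
    ¬ ∃ (N q f l : ℕ), 0 < N ∧ q.Prime ∧ Odd q ∧ 1 ≤ f ∧ 0 < l ∧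
      infsigma N = 2 ^ f * q ^ 2 ^ l ∧ infsigma (infsigma N) = 2 * N := by
  rintro ⟨N, q, f, l, hN, hq, hq_odd, -, hl, hσ, hσσ⟩
  have hq2 : q ≠ 2 := hq_odd.ne_two_of_dvd_nat dvd_rfl
  obtain ⟨y, hy, hX⟩ : ∃ y, Odd y ∧ q ^ 2 ^ l = y ^ 2 :=
    ⟨q ^ 2 ^ (l - 1), hq_odd.pow, by rw [← pow_mul, ← pow_succ, Nat.sub_add_cancel hl]⟩
  have h9 : 9 ≤ q ^ 2 ^ l :=
    calc 9 = 3 ^ 2 := rfl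
      _ ≤ q ^ 2 := Nat.pow_le_pow_left (by have := hq.two_le; omega) 2
      _ ≤ q ^ 2 ^ l := Nat.pow_le_pow_right hq.pos (Nat.le_self_pow hl.ne' 2)
  have hkey : infsigma (2 ^ f) * (q ^ 2 ^ l + 1) = 2 * N := by
    rw [← hσσ, hσ, infsigma_mul (Nat.Coprime.pow _ _
      ((Nat.coprime_primes Nat.prime_two hq).2 hq2.symm)), infsigma_prime_pow_two_pow hq]
  obtain ⟨n, rfl | rfl⟩ := Nat.even_or_odd' f
  · exact infsigma_ne_two_pow_mul_of_even hq hq2 hN.ne' hy hX h9 hkey hσ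
  · exact infsigma_ne_two_pow_mul_of_odd (hX ▸ not_three_dvd_sq_add_one y) hkey hσ
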